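/- Let G be a simple edge-Δ-critical graph, xy ∈ E(G), φ ∈ C^Δ(G - xy), and q a positive number with d(x) < q ≤ Δ - 1. Let Z = {z ∈ N(x) \ {y} : d(z) > q and φ(xz) ∈ φ̄(y)}. Then Σ_{z∈Z} (d(z) - q) ≥ (Δ - d(y) + 1)(Δ - q) - d(x) - d(y) + Δ + 2. -/

import Mathlib

/-
The fan `{x, y} ∪ Z₀`, with `Z₀` the neighbours `z ≠ y` of `x` for which `φ(xz)` is missing at `y`,
is elementary: its vertices have pairwise disjoint sets of missing colours. A colour missing at
both `x` and `y` would colour `xy`; one missing at `x` and at `z ∈ Z₀` could be put on `xz`, which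
frees `φ(xz)`, a colour missing at `y`, at `x`. If two of `y` and `Z₀` miss a common colour `γ`,
take `β` missing at `x`: the `β`/`γ` path starting at `x` ends at only one of them, so a Kempe
swap at the other one reduces to the previous cases.

Hence `∑_{v ∈ fan} |φ̄(v)| ≤ Δ`. With `|φ̄(v)| ≥ Δ - d(v)`, and `+ 1` at `x` and `y`, this gives
`∑_{z ∈ Z₀} (Δ - d(z)) ≤ d(x) + d(y) - Δ - 2`; and every colour missing at `y` is on some `xz`, so
`|Z₀| ≥ Δ - d(y) + 1`. Writing `d(z) - q = (d(z) - Δ) + (Δ - q)` and dropping the terms with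
`d(z) ≤ q` gives the bound.
-/

open Finset
open scoped Classical

variable {V : Type*}

/-- `φ` is a proper edge coloring of `G` using colors `{1,…,k}`. -/
def IsProperEdgeColoring (G : SimpleGraph V) (k : ℕ) (φ : Sym2 V → ℕ) : Prop :=
  (∀ e ∈ G.edgeSet, φ e ∈ Finset.Icc 1 k) ∧
  ∀ e ∈ G.edgeSet, ∀ f ∈ G.edgeSet, e ≠ f → (∃ v, v ∈ e ∧ v ∈ f) → φ e ≠ φ f

/-- The set of colors of `{1,…,k}` missing at `v` under `φ`. -/
noncomputable def missing (G : SimpleGraph V) (k : ℕ) (φ : Sym2 V → ℕ) (v : V) : Finset ℕ :=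
  (Finset.Icc 1 k).filter (fun c => ∀ u, G.Adj v u → φ s(v, u) ≠ c)

/-- `G` is edge-`Δ`-critical: max degree `Δ`, `χ' = Δ+1`, and every proper
subgraph is edge-`Δ`-colorable. -/
def EdgeCritical (G : SimpleGraph V) [Fintype V] (Δ : ℕ) : Prop :=
  G.maxDegree = Δ ∧
  ¬ (∃ φ, IsProperEdgeColoring G Δ φ) ∧
  (∃ φ, IsProperEdgeColoring G (Δ + 1) φ) ∧
  ∀ H : SimpleGraph V, H < G → ∃ φ, IsProperEdgeColoring H Δ φ

open SimpleGraph

section Coloring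

variable {G H : SimpleGraph V} {k : ℕ} {φ : Sym2 V → ℕ} {u v w : V} {c : ℕ}

lemma mem_missing_iff :
    c ∈ missing G k φ v ↔ c ∈ Icc 1 k ∧ ∀ u, G.Adj v u → φ s(v, u) ≠ c := by
  simp [missing]

lemma missing_subset_Icc : missing G k φ v ⊆ Icc 1 k := filter_subset _ _

lemma missing_mono (hHG : H ≤ G) : missing G k φ v ⊆ missing H k φ v := fun _ hc =>
  mem_missing_iff.mpr ⟨(mem_missing_iff.mp hc).1, fun u hu => (mem_missing_iff.mp hc).2 u (hHG hu)⟩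

lemma ne_of_mem_missing {e : Sym2 V} (he : e ∈ G.edgeSet) (hv : v ∈ e)
    (hc : c ∈ missing G k φ v) : φ e ≠ c := by
  induction e using Sym2.ind with
  | _ a b =>
    rcases Sym2.mem_iff.mp hv with rfl | rfl
    · exact (mem_missing_iff.mp hc).2 b he
    · exact Sym2.eq_swap (a := a) ▸ (mem_missing_iff.mp hc).2 a (G.adj_symm he)

lemma exists_adj_of_notMem_missing (hc : c ∈ Icc 1 k) (h : c ∉ missing G k φ v) :
    ∃ u, G.Adj v u ∧ φ s(v, u) = c := by
  by_contra! hn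
  exact h (mem_missing_iff.mpr ⟨hc, hn⟩)

lemma le_card_missing_add_degree (G : SimpleGraph V) (k : ℕ) (φ : Sym2 V → ℕ) (v : V)
    [Fintype (G.neighborSet v)] : k ≤ #(missing G k φ v) + G.degree v := by
  have hsub : Icc 1 k ⊆ missing G k φ v ∪ (G.neighborFinset v).image (fun u => φ s(v, u)) := by
    intro c hc
    by_cases hm : c ∈ missing G k φ v
    · exact mem_union_left _ hm
    · obtain ⟨u, hu, rfl⟩ := exists_adj_of_notMem_missing hc hm
      exact mem_union_right _ (mem_image_of_mem _ ((G.mem_neighborFinset v u).mpr hu))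
  calc k = #(Icc 1 k) := by simp
    _ ≤ #(missing G k φ v) + #((G.neighborFinset v).image (fun u => φ s(v, u))) :=
        (card_le_card hsub).trans (card_union_le _ _)
    _ ≤ #(missing G k φ v) + G.degree v := by
        grw [card_image_le, card_neighborFinset_eq_degree]

namespace IsProperEdgeColoring

lemma mono (hHG : H ≤ G) (hφ : IsProperEdgeColoring G k φ) : IsProperEdgeColoring H k φ :=
  ⟨fun e he => hφ.1 e (edgeSet_mono hHG he),
    fun e he f hf => hφ.2 e (edgeSet_mono hHG he) f (edgeSet_mono hHG hf)⟩

lemma ne_of_adj (hφ : IsProperEdgeColoring G k φ) (hu : G.Adj v u) (hw : G.Adj v w)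
    (huw : u ≠ w) : φ s(v, u) ≠ φ s(v, w) :=
  hφ.2 _ hu _ hw (by rwa [Ne, Sym2.congr_right]) ⟨v, Sym2.mem_mk_left v u, Sym2.mem_mk_left v w⟩

lemma update {a b : V} (hφ : IsProperEdgeColoring (G.deleteEdges {s(a, b)}) k φ)
    (ha : c ∈ missing (G.deleteEdges {s(a, b)}) k φ a)
    (hb : c ∈ missing (G.deleteEdges {s(a, b)}) k φ b) :
    IsProperEdgeColoring G k (Function.update φ s(a, b) c) := by
  have hdel : ∀ {e}, e ∈ G.edgeSet → e ≠ s(a, b) → e ∈ (G.deleteEdges {s(a, b)}).edgeSet :=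
    fun he hne => by simpa [edgeSet_deleteEdges] using ⟨he, hne⟩
  have hnew : ∀ {f}, f ∈ G.edgeSet → f ≠ s(a, b) → (∃ v, v ∈ s(a, b) ∧ v ∈ f) → φ f ≠ c := by
    rintro f hf hne ⟨v, hv, hvf⟩
    rcases Sym2.mem_iff.mp hv with rfl | rfl
    · exact ne_of_mem_missing (hdel hf hne) hvf ha
    · exact ne_of_mem_missing (hdel hf hne) hvf hb
  refine ⟨fun e he => ?_, fun e he f hf hef hshare => ?_⟩
  · rcases eq_or_ne e s(a, b) with rfl | hne
    · simpa using missing_subset_Icc ha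
    · simpa [hne] using hφ.1 e (hdel he hne)
  · rcases eq_or_ne e s(a, b) with rfl | hne
    · simpa [hef.symm] using (hnew hf hef.symm hshare).symm
    rcases eq_or_ne f s(a, b) with rfl | hne'
    · simpa [hne] using hnew he hne (hshare.imp fun _ => And.symm)
    simpa [hne, hne'] using hφ.2 e (hdel he hne) f (hdel hf hne') hef hshare

end IsProperEdgeColoring

lemma mem_missing_update_of_notMem {e : Sym2 V} {c' : ℕ} (hv : v ∉ e)
    (hc : c ∈ missing G k φ v) : c ∈ missing G k (Function.update φ e c') v := by
  refine mem_missing_iff.mpr ⟨missing_subset_Icc hc, fun u hu => ?_⟩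
  rw [Function.update_of_ne (by rintro rfl; exact hv (Sym2.mem_mk_left v u))]
  exact (mem_missing_iff.mp hc).2 u hu

def NoCommonMissingColor (H : SimpleGraph V) (k : ℕ) (x y : V) : Prop :=
  ∀ ψ, IsProperEdgeColoring H k ψ → Disjoint (missing H k ψ x) (missing H k ψ y)

lemma noCommonMissingColor_deleteEdges (hG : ¬ ∃ ψ, IsProperEdgeColoring G k ψ) (x y : V) :
    NoCommonMissingColor (G.deleteEdges {s(x, y)}) k x y := fun _ hφ =>
  Finset.disjoint_left.mpr fun _ hx hy => hG ⟨_, hφ.update hx hy⟩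

end Coloring

section Kempe

variable (G : SimpleGraph V) (φ : Sym2 V → ℕ) (β γ : ℕ) (w : V)

def chainGraph : SimpleGraph V where
  Adj u v := G.Adj u v ∧ (φ s(u, v) = β ∨ φ s(u, v) = γ)
  symm := ⟨fun _ _ h => ⟨h.1.symm, by rw [Sym2.eq_swap]; exact h.2⟩⟩
  loopless := ⟨fun v h => G.loopless.irrefl v h.1⟩

noncomputable def kempeSwap : Sym2 V → ℕ := fun e =>
  if ∃ v ∈ e, (chainGraph G φ β γ).Reachable w v then Equiv.swap β γ (φ e) else φ e

variable {G φ β γ w} {k c : ℕ} {u v : V} {e : Sym2 V}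

lemma chainGraph_comm : chainGraph G φ β γ = chainGraph G φ γ β := by
  ext u v
  exact and_congr_right fun _ => or_comm

lemma kempeSwap_apply_of_reachable (hv : v ∈ e) (hw : (chainGraph G φ β γ).Reachable w v) :
    kempeSwap G φ β γ w e = Equiv.swap β γ (φ e) :=
  if_pos ⟨v, hv, hw⟩

lemma kempeSwap_apply_of_not_reachable (he : e ∈ G.edgeSet) (hv : v ∈ e)
    (hw : ¬ (chainGraph G φ β γ).Reachable w v) : kempeSwap G φ β γ w e = φ e := by
  unfold kempeSwap
  split_ifs with hreach
  · obtain ⟨u, hu, hwu⟩ := hreach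
    -- `e` joins the component of `w` to a vertex outside it, so it is not a `β`/`γ` edge
    refine Equiv.swap_apply_of_ne_of_ne ?_ ?_ <;> intro hc <;> apply hw
    all_goals
      induction e using Sym2.ind with
      | _ a b =>
        have hab : (chainGraph G φ β γ).Adj a b := ⟨he, by simp [hc]⟩
        rcases Sym2.mem_iff.mp hu with rfl | rfl <;> rcases Sym2.mem_iff.mp hv with rfl | rfl
        exacts [hwu, hwu.trans hab.reachable, hwu.trans hab.symm.reachable, hwu]
  · rfl

lemma isProperEdgeColoring_kempeSwap (hφ : IsProperEdgeColoring G k φ)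
    (hβ : β ∈ Icc 1 k) (hγ : γ ∈ Icc 1 k) : IsProperEdgeColoring G k (kempeSwap G φ β γ w) := by
  refine ⟨fun e he => ?_, fun e he f hf hef ⟨v, hve, hvf⟩ => ?_⟩
  · unfold kempeSwap
    split_ifs
    · rw [Equiv.swap_apply_def]
      split_ifs
      exacts [hγ, hβ, hφ.1 e he]
    · exact hφ.1 e he
  · by_cases hw : (chainGraph G φ β γ).Reachable w v
    · rw [kempeSwap_apply_of_reachable hve hw, kempeSwap_apply_of_reachable hvf hw]
      exact (Equiv.swap β γ).injective.ne (hφ.2 e he f hf hef ⟨v, hve, hvf⟩)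
    · rw [kempeSwap_apply_of_not_reachable he hve hw, kempeSwap_apply_of_not_reachable hf hvf hw]
      exact hφ.2 e he f hf hef ⟨v, hve, hvf⟩

lemma kempeSwap_apply_of_ne (hβ : φ e ≠ β) (hγ : φ e ≠ γ) : kempeSwap G φ β γ w e = φ e := by
  unfold kempeSwap
  split_ifs
  exacts [Equiv.swap_apply_of_ne_of_ne hβ hγ, rfl]

lemma mem_missing_kempeSwap_of_reachable (hw : (chainGraph G φ β γ).Reachable w v)
    (hc : c ∈ Icc 1 k) (hswap : Equiv.swap β γ c ∈ missing G k φ v) :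
    c ∈ missing G k (kempeSwap G φ β γ w) v := by
  refine mem_missing_iff.mpr ⟨hc, fun u hu => ?_⟩
  rw [kempeSwap_apply_of_reachable (Sym2.mem_mk_left v u) hw, Ne, Equiv.swap_apply_eq_iff]
  exact (mem_missing_iff.mp hswap).2 u hu

lemma mem_missing_kempeSwap_of_not_reachable (hw : ¬ (chainGraph G φ β γ).Reachable w v)
    (hc : c ∈ missing G k φ v) : c ∈ missing G k (kempeSwap G φ β γ w) v := by
  refine mem_missing_iff.mpr ⟨missing_subset_Icc hc, fun u hu => ?_⟩
  rw [kempeSwap_apply_of_not_reachable hu (Sym2.mem_mk_left v u) hw]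
  exact (mem_missing_iff.mp hc).2 u hu

lemma mem_missing_kempeSwap_of_ne (hβ : c ≠ β) (hγ : c ≠ γ) (hc : c ∈ missing G k φ v) :
    c ∈ missing G k (kempeSwap G φ β γ w) v := by
  refine mem_missing_iff.mpr ⟨missing_subset_Icc hc, fun u hu => ?_⟩
  have hne := (mem_missing_iff.mp hc).2 u hu
  unfold kempeSwap
  split_ifs
  · rwa [Ne, Equiv.swap_apply_eq_iff, Equiv.swap_apply_of_ne_of_ne hβ hγ]
  · exact hne

lemma degree_chainGraph_le_card [Fintype V] (hφ : IsProperEdgeColoring G k φ) (S : Finset ℕ)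
    (hS : ∀ u, (chainGraph G φ β γ).Adj v u → φ s(v, u) ∈ S) :
    (chainGraph G φ β γ).degree v ≤ #S := by
  rw [← card_neighborFinset_eq_degree]
  refine card_le_card_of_injOn (fun u => φ s(v, u)) (fun u hu => hS u (by simpa using hu)) ?_
  intro u hu u' hu' huu'
  by_contra hne
  exact hφ.ne_of_adj (by simpa using hu : (chainGraph G φ β γ).Adj v u).1
    (by simpa using hu' : (chainGraph G φ β γ).Adj v u').1 hne huu'

lemma degree_chainGraph_le_two [Fintype V] (hφ : IsProperEdgeColoring G k φ) (v : V) :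
    (chainGraph G φ β γ).degree v ≤ 2 :=
  (degree_chainGraph_le_card hφ {β, γ} fun _ hu => by simpa using hu.2).trans card_le_two

lemma degree_chainGraph_le_one [Fintype V] (hφ : IsProperEdgeColoring G k φ)
    (hγ : γ ∈ missing G k φ v) : (chainGraph G φ β γ).degree v ≤ 1 :=
  (degree_chainGraph_le_card hφ {β} fun u hu => by
    simpa using hu.2.resolve_right ((mem_missing_iff.mp hγ).2 u hu.1)).trans (card_singleton β).le

end Kempe

namespace SimpleGraph

variable {W : Type*} [Fintype W] {H : SimpleGraph W} {a b c : W}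

lemma Connected.not_three_degree_le_one (hH : H.Connected) (hdeg : ∀ v, H.degree v ≤ 2)
    (hab : a ≠ b) (hac : a ≠ c) (hbc : b ≠ c)
    (ha : H.degree a ≤ 1) (hb : H.degree b ≤ 1) (hc : H.degree c ≤ 1) : False := by
  -- `2 (n - 1) ≤ 2 |E| = ∑ deg ≤ 2 n - 3`
  have hedges : Fintype.card W ≤ #H.edgeFinset + 1 := by
    convert hH.card_vert_le_card_edgeSet_add_one using 2
    · exact Nat.card_eq_fintype_card.symm
    · rw [Nat.card_eq_fintype_card, edgeFinset_card]
  have hT : #({a, b, c} : Finset W) = 3 := card_eq_three.mpr ⟨a, b, c, hab, hac, hbc, rfl⟩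
  have hsum : ∑ v, H.degree v + 3 ≤ 2 * Fintype.card W := by
    rw [← sum_sdiff (subset_univ {a, b, c})]
    have hrest : ∑ v ∈ univ \ {a, b, c}, H.degree v ≤ 2 * #(univ \ {a, b, c}) := by
      exact (sum_le_sum fun v _ => hdeg v).trans_eq (by rw [sum_const, smul_eq_mul, mul_comm])
    have hends : ∑ v ∈ ({a, b, c} : Finset W), H.degree v ≤ 3 := by
      rw [sum_insert (by simp [hab, hac]), sum_pair hbc]
      omega
    have := card_sdiff_add_card_eq_card (subset_univ ({a, b, c} : Finset W))
    rw [card_univ] at this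
    omega
  have := H.sum_degrees_eq_twice_card_edges
  omega

lemma Reachable.not_three_degree_le_one (hdeg : ∀ v, H.degree v ≤ 2)
    (hab : a ≠ b) (hac : a ≠ c) (hbc : b ≠ c)
    (ha : H.degree a ≤ 1) (hb : H.degree b ≤ 1) (hc : H.degree c ≤ 1)
    (hrab : H.Reachable a b) (hrac : H.Reachable a c) : False := by
  set C := H.connectedComponentMk a
  have hdegC : ∀ v : C, C.toSimpleGraph.degree v = H.degree v := fun v => by
    convert degree_induce_of_neighborSet_subset fun _ hu => C.mem_supp_of_adj_mem_supp v.2 hu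
      <;> rfl
  have hbC : b ∈ C.supp := ConnectedComponent.sound hrab.symm
  have hcC : c ∈ C.supp := ConnectedComponent.sound hrac.symm
  refine C.connected_toSimpleGraph.not_three_degree_le_one (a := ⟨a, rfl⟩) (b := ⟨b, hbC⟩)
    (c := ⟨c, hcC⟩) (fun v => (hdegC v).trans_le (hdeg v)) ?_ ?_ ?_ ?_ ?_ ?_
  · exact Subtype.coe_ne_coe.mp hab
  · exact Subtype.coe_ne_coe.mp hac
  · exact Subtype.coe_ne_coe.mp hbc
  all_goals rw [hdegC]; assumption

end SimpleGraph

section DeleteEdge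

variable {G : SimpleGraph V} {x y z : V}

lemma deleteEdges_adj_left : (G.deleteEdges {s(x, y)}).Adj x z ↔ G.Adj x z ∧ z ≠ y := by
  rw [deleteEdges_adj, Set.mem_singleton_iff, Sym2.congr_right]

lemma degree_deleteEdges_add_one {e : Sym2 V} [Fintype ((G.deleteEdges {e}).neighborSet x)]
    [Fintype (G.neighborSet x)] (he : e ∈ G.edgeSet) (hx : x ∈ e) :
    (G.deleteEdges {e}).degree x + 1 = G.degree x := by
  obtain ⟨y, rfl⟩ := Sym2.mem_iff_exists.mp hx
  have hnbr : (G.deleteEdges {s(x, y)}).neighborFinset x = (G.neighborFinset x).erase y := by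
    ext u
    rw [mem_neighborFinset, deleteEdges_adj_left, mem_erase, mem_neighborFinset, and_comm]
  rw [← card_neighborFinset_eq_degree, hnbr, card_erase_add_one ((G.mem_neighborFinset x y).mpr he),
    card_neighborFinset_eq_degree]

lemma degree_deleteEdges_of_ne [Fintype ((G.deleteEdges {s(x, y)}).neighborSet z)]
    [Fintype (G.neighborSet z)] (hzx : z ≠ x) (hzy : z ≠ y) :
    (G.deleteEdges {s(x, y)}).degree z = G.degree z := by
  have hnbr : (G.deleteEdges {s(x, y)}).neighborFinset z = G.neighborFinset z := by
    ext u
    simp [hzx, hzy]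
  rw [← card_neighborFinset_eq_degree, hnbr, card_neighborFinset_eq_degree]

end DeleteEdge

section VizingFan

variable [Fintype V]

noncomputable def fanLeaves (H : SimpleGraph V) (k : ℕ) (φ : Sym2 V → ℕ) (x y : V) : Finset V :=
  univ.filter fun z => H.Adj x z ∧ φ s(x, z) ∈ missing H k φ y

variable {H : SimpleGraph V} {k : ℕ} {φ : Sym2 V → ℕ} {x y z u v : V}

lemma mem_fanLeaves :
    z ∈ fanLeaves H k φ x y ↔ H.Adj x z ∧ φ s(x, z) ∈ missing H k φ y := by
  simp [fanLeaves]

/-- Recolouring `xz` with a colour missing at `x` and `z` frees the old colour of `xz` at `x`,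
and that colour is missing at `y` too. -/
lemma disjoint_missing_of_mem_fanLeaves (hxy : x ≠ y)
    (hH : NoCommonMissingColor H k x y)
    (hφ : IsProperEdgeColoring H k φ) (hz : z ∈ fanLeaves H k φ x y) :
    Disjoint (missing H k φ x) (missing H k φ z) := by
  obtain ⟨hxz, hzy⟩ := mem_fanLeaves.mp hz
  refine Finset.disjoint_left.mpr fun b hbx hbz => ?_
  have hle : H.deleteEdges {s(x, z)} ≤ H := deleteEdges_le _
  have hφ' : IsProperEdgeColoring H k (Function.update φ s(x, z) b) :=
    (hφ.mono hle).update (missing_mono hle hbx) (missing_mono hle hbz)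
  have hfree : φ s(x, z) ∈ missing H k (Function.update φ s(x, z) b) x := by
    refine mem_missing_iff.mpr ⟨hφ.1 _ hxz, fun u hu => ?_⟩
    rcases eq_or_ne u z with rfl | huz
    · rw [Function.update_self]
      exact fun h => (mem_missing_iff.mp hbx).2 u hxz h.symm
    · rw [Function.update_of_ne (by rwa [Ne, Sym2.congr_right])]
      exact hφ.ne_of_adj hu hxz huz
  have hy : y ∉ s(x, z) := by
    rw [Sym2.mem_iff]
    rintro (rfl | rfl)
    · exact hxy rfl
    · exact (mem_missing_iff.mp hzy).2 x hxz.symm (by rw [Sym2.eq_swap])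
  exact Finset.disjoint_left.mp (hH _ hφ') hfree (mem_missing_update_of_notMem hy hzy)

lemma disjoint_missing_of_mem_fan (hxy : x ≠ y)
    (hH : NoCommonMissingColor H k x y)
    (hφ : IsProperEdgeColoring H k φ) (hu : u ∈ insert y (fanLeaves H k φ x y)) :
    Disjoint (missing H k φ x) (missing H k φ u) := by
  rcases mem_insert.mp hu with rfl | hu
  exacts [hH φ hφ, disjoint_missing_of_mem_fanLeaves hxy hH hφ hu]

/-- Otherwise swapping `β` and `γ` on the chain of `u` would make `β` missing at both `x`
and `u`, while keeping `u` in the fan. -/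
lemma reachable_of_mem_fan (hxy : x ≠ y)
    (hH : NoCommonMissingColor H k x y)
    (hφ : IsProperEdgeColoring H k φ) {β γ : ℕ} (hu : u ∈ insert y (fanLeaves H k φ x y))
    (hβ : β ∈ missing H k φ x) (hγ : γ ∈ missing H k φ u) :
    (chainGraph H φ β γ).Reachable u x := by
  by_contra hnr
  have hφ' : IsProperEdgeColoring H k (kempeSwap H φ β γ u) :=
    isProperEdgeColoring_kempeSwap hφ (missing_subset_Icc hβ) (missing_subset_Icc hγ)
  have hβu : β ∈ missing H k (kempeSwap H φ β γ u) u :=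
    mem_missing_kempeSwap_of_reachable .rfl (missing_subset_Icc hβ) (by simpa using hγ)
  have hu' : u ∈ insert y (fanLeaves H k (kempeSwap H φ β γ u) x y) := by
    rcases mem_insert.mp hu with rfl | hu
    · exact mem_insert_self _ _
    obtain ⟨hxu, hcol⟩ := mem_fanLeaves.mp hu
    have hβ' : φ s(x, u) ≠ β := (mem_missing_iff.mp hβ).2 u hxu
    have hγ' : φ s(x, u) ≠ γ := Sym2.eq_swap (a := x) ▸ (mem_missing_iff.mp hγ).2 x hxu.symm
    refine mem_insert_of_mem (mem_fanLeaves.mpr ⟨hxu, ?_⟩)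
    rw [kempeSwap_apply_of_ne hβ' hγ']
    exact mem_missing_kempeSwap_of_ne hβ' hγ' hcol
  exact Finset.disjoint_left.mp (disjoint_missing_of_mem_fan hxy hH hφ' hu')
    (mem_missing_kempeSwap_of_not_reachable hnr hβ) hβu

/-- All three of `x`, `u`, `v` would be ends of the `β`/`γ` path through `x`. -/
lemma disjoint_missing_of_mem_fan_of_ne (hxy : x ≠ y)
    (hH : NoCommonMissingColor H k x y)
    (hφ : IsProperEdgeColoring H k φ) (hx : (missing H k φ x).Nonempty)
    (hu : u ∈ insert y (fanLeaves H k φ x y)) (hv : v ∈ insert y (fanLeaves H k φ x y))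
    (huv : u ≠ v) : Disjoint (missing H k φ u) (missing H k φ v) := by
  refine Finset.disjoint_left.mpr fun γ hγu hγv => ?_
  obtain ⟨β, hβ⟩ := hx
  have hxw : ∀ {w}, w ∈ insert y (fanLeaves H k φ x y) → x ≠ w := by
    intro w hw
    rcases mem_insert.mp hw with rfl | hw
    exacts [hxy, (mem_fanLeaves.mp hw).1.ne]
  refine Reachable.not_three_degree_le_one (degree_chainGraph_le_two hφ) (hxw hu) (hxw hv) huv
    ?_ (degree_chainGraph_le_one hφ hγu) (degree_chainGraph_le_one hφ hγv)
    (reachable_of_mem_fan hxy hH hφ hu hβ hγu).symm (reachable_of_mem_fan hxy hH hφ hv hβ hγv).symm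
  rw [chainGraph_comm]
  exact degree_chainGraph_le_one hφ hβ

lemma pairwiseDisjoint_missing_fan (hxy : x ≠ y)
    (hH : NoCommonMissingColor H k x y)
    (hφ : IsProperEdgeColoring H k φ) (hx : (missing H k φ x).Nonempty) :
    (↑(insert x (insert y (fanLeaves H k φ x y))) : Set V).PairwiseDisjoint (missing H k φ) := by
  intro u hu v hv huv
  rcases mem_insert.mp hu with rfl | hu <;> rcases mem_insert.mp hv with rfl | hv
  · exact absurd rfl huv
  · exact disjoint_missing_of_mem_fan hxy hH hφ hv
  · exact (disjoint_missing_of_mem_fan hxy hH hφ hu).symm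
  · exact disjoint_missing_of_mem_fan_of_ne hxy hH hφ hx hu hv huv

end VizingFan

section Counting

variable [Fintype V] {G H : SimpleGraph V} {k : ℕ} {φ : Sym2 V → ℕ} {x y : V}

lemma card_missing_add_sum_card_missing_fanLeaves_le (hxy : x ≠ y)
    (hH : NoCommonMissingColor H k x y)
    (hφ : IsProperEdgeColoring H k φ) (hx : (missing H k φ x).Nonempty) :
    #(missing H k φ x) + #(missing H k φ y) + ∑ z ∈ fanLeaves H k φ x y, #(missing H k φ z)
      ≤ k := by
  have hyL : y ∉ fanLeaves H k φ x y := fun h =>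
    (mem_missing_iff.mp (mem_fanLeaves.mp h).2).2 x (mem_fanLeaves.mp h).1.symm
      (congrArg φ Sym2.eq_swap)
  have hxL : x ∉ insert y (fanLeaves H k φ x y) := by
    rw [mem_insert, not_or]
    exact ⟨hxy, fun h => (mem_fanLeaves.mp h).1.ne rfl⟩
  calc _ = ∑ v ∈ insert x (insert y (fanLeaves H k φ x y)), #(missing H k φ v) := by
        rw [sum_insert hxL, sum_insert hyL, add_assoc]
    _ = #((insert x (insert y (fanLeaves H k φ x y))).biUnion (missing H k φ)) :=
        (card_biUnion (pairwiseDisjoint_missing_fan hxy hH hφ hx)).symm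
    _ ≤ #(Icc 1 k) := card_le_card (biUnion_subset.mpr fun _ _ => missing_subset_Icc)
    _ = k := by simp

lemma card_missing_le_card_fanLeaves
    (hH : NoCommonMissingColor H k x y)
    (hφ : IsProperEdgeColoring H k φ) : #(missing H k φ y) ≤ #(fanLeaves H k φ x y) := by
  have hsub : missing H k φ y ⊆ (fanLeaves H k φ x y).image fun z => φ s(x, z) := by
    intro c hc
    obtain ⟨z, hxz, rfl⟩ := exists_adj_of_notMem_missing (missing_subset_Icc hc)
      (Finset.disjoint_right.mp (hH φ hφ) hc)
    exact mem_image_of_mem _ (mem_fanLeaves.mpr ⟨hxz, hc⟩)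
  exact (card_le_card hsub).trans card_image_le

lemma le_card_fanLeaves (hG : ¬ ∃ ψ, IsProperEdgeColoring G k ψ) (hxy : G.Adj x y)
    (hφ : IsProperEdgeColoring (G.deleteEdges {s(x, y)}) k φ) :
    k + 1 ≤ #(fanLeaves (G.deleteEdges {s(x, y)}) k φ x y) + G.degree y := by
  have := card_missing_le_card_fanLeaves (noCommonMissingColor_deleteEdges hG x y) hφ
  have := le_card_missing_add_degree (G.deleteEdges {s(x, y)}) k φ y
  have := degree_deleteEdges_add_one hxy (Sym2.mem_mk_right x y)
  omega

lemma sum_fanLeaves_sub_degree_le (hG : ¬ ∃ ψ, IsProperEdgeColoring G k ψ) (hxy : G.Adj x y)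
    (hdeg : G.degree x ≤ k) (hφ : IsProperEdgeColoring (G.deleteEdges {s(x, y)}) k φ) :
    ∑ z ∈ fanLeaves (G.deleteEdges {s(x, y)}) k φ x y, ((k : ℝ) - G.degree z) ≤
      G.degree x + G.degree y - k - 2 := by
  have hdx := degree_deleteEdges_add_one hxy (Sym2.mem_mk_left x y)
  have hdy := degree_deleteEdges_add_one hxy (Sym2.mem_mk_right x y)
  have hmx := le_card_missing_add_degree (G.deleteEdges {s(x, y)}) k φ x
  have hmy := le_card_missing_add_degree (G.deleteEdges {s(x, y)}) k φ y
  have hsum := card_missing_add_sum_card_missing_fanLeaves_le hxy.ne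
    (noCommonMissingColor_deleteEdges hG x y) hφ (card_pos.mp (by omega))
  have hsumℝ : (∑ z ∈ fanLeaves (G.deleteEdges {s(x, y)}) k φ x y,
      #(missing (G.deleteEdges {s(x, y)}) k φ z) : ℝ) + k + 2 ≤ G.degree x + G.degree y := by
    exact_mod_cast (by omega : _ + k + 2 ≤ G.degree x + G.degree y)
  have hleaf : ∀ z ∈ fanLeaves (G.deleteEdges {s(x, y)}) k φ x y,
      (k : ℝ) - G.degree z ≤ #(missing (G.deleteEdges {s(x, y)}) k φ z) := by
    intro z hz
    obtain ⟨hxz, hzy⟩ := deleteEdges_adj_left.mp (mem_fanLeaves.mp hz).1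
    have h := le_card_missing_add_degree (G.deleteEdges {s(x, y)}) k φ z
    rw [degree_deleteEdges_of_ne hxz.ne' hzy] at h
    have h' : (k : ℝ) ≤ #(missing (G.deleteEdges {s(x, y)}) k φ z) + G.degree z := by
      exact_mod_cast h
    linarith
  linarith [sum_le_sum hleaf]

end Counting

lemma mul_sub_sub_le_sum_filter_sub {ι : Type*} (s : Finset ι) (f : ι → ℝ) {n B p q : ℝ}
    (hq : q ≤ p) (hn : n ≤ #s) (hB : ∑ i ∈ s, (p - f i) ≤ B) :
    n * (p - q) - B ≤ ∑ i ∈ s.filter (fun i => q < f i), (f i - q) := by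
  have hsplit : ∑ i ∈ s, (f i - q) = #s * (p - q) - ∑ i ∈ s, (p - f i) := by
    rw [← nsmul_eq_mul, ← sum_const, ← sum_sub_distrib]
    exact sum_congr rfl fun _ _ => by ring
  have hfilter : ∑ i ∈ s, (f i - q) ≤ ∑ i ∈ s.filter (fun i => q < f i), (f i - q) := by
    rw [sum_filter]
    refine sum_le_sum fun i _ => ?_
    split_ifs with h
    · exact le_rfl
    · linarith [not_lt.mp h]
  nlinarith [mul_le_mul_of_nonneg_right hn (sub_nonneg.mpr hq)]

theorem stmt8_general (G : SimpleGraph V) [Fintype V] (Δ : ℕ) (hc : EdgeCritical G Δ)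
    (x y : V) (hxy : G.Adj x y) (φ : Sym2 V → ℕ)
    (hφ : IsProperEdgeColoring (G.deleteEdges {s(x, y)}) Δ φ)
    (q : ℝ) (hq2 : q ≤ (Δ : ℝ) - 1) :
    ((Δ : ℝ) - (G.degree y : ℝ) + 1) * ((Δ : ℝ) - q) -
        (G.degree x : ℝ) - (G.degree y : ℝ) + (Δ : ℝ) + 2 ≤
      ∑ z ∈ Finset.univ.filter (fun z => G.Adj x z ∧ z ≠ y ∧ q < (G.degree z : ℝ) ∧
          φ s(x, z) ∈ missing (G.deleteEdges {s(x, y)}) Δ φ y),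
        ((G.degree z : ℝ) - q) := by
  obtain ⟨hmax, hG, -, -⟩ := hc
  have hZ : Finset.univ.filter (fun z => G.Adj x z ∧ z ≠ y ∧ q < (G.degree z : ℝ) ∧
      φ s(x, z) ∈ missing (G.deleteEdges {s(x, y)}) Δ φ y) =
      (fanLeaves (G.deleteEdges {s(x, y)}) Δ φ x y).filter (fun z => q < G.degree z) := by
    ext z
    simp only [mem_filter, mem_univ, true_and, mem_fanLeaves, deleteEdges_adj_left]
    tauto
  have hL : (Δ : ℝ) - G.degree y + 1 ≤ #(fanLeaves (G.deleteEdges {s(x, y)}) Δ φ x y) := by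
    have h : ((Δ + 1 : ℕ) : ℝ) ≤ ((_ + G.degree y : ℕ) : ℝ) :=
      Nat.cast_le.mpr (le_card_fanLeaves hG hxy hφ)
    push_cast at h
    linarith
  rw [hZ]
  linarith [mul_sub_sub_le_sum_filter_sub _ _ (by linarith) hL
    (sum_fanLeaves_sub_degree_le hG hxy (hmax ▸ G.degree_le_maxDegree x) hφ)]

theorem stmt8 (G : SimpleGraph V) [Fintype V] (Δ : ℕ) (hc : EdgeCritical G Δ)
    (x y : V) (hxy : G.Adj x y) (φ : Sym2 V → ℕ)
    (hφ : IsProperEdgeColoring (G.deleteEdges {s(x, y)}) Δ φ)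
    (q : ℝ) (hq0 : 0 < q) (hq1 : (G.degree x : ℝ) < q) (hq2 : q ≤ (Δ : ℝ) - 1) :
    ((Δ : ℝ) - (G.degree y : ℝ) + 1) * ((Δ : ℝ) - q) -
        (G.degree x : ℝ) - (G.degree y : ℝ) + (Δ : ℝ) + 2 ≤
      ∑ z ∈ Finset.univ.filter (fun z => G.Adj x z ∧ z ≠ y ∧ q < (G.degree z : ℝ) ∧
          φ s(x, z) ∈ missing (G.deleteEdges {s(x, y)}) Δ φ y),
        ((G.degree z : ℝ) - q) :=
  stmt8_general G Δ hc x y hxy φ hφ q hq2
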